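/- arXiv:1609.02258 — 7 statements merged into one kernel-verified Lean document; each statement's English description precedes it below -/
import Mathlib

section
/- Let A be an m×n real matrix, M an m×c matrix, and N an r×n matrix. Then X* = M†AN† minimizes ‖A − MXN‖_F over all c×r matrices X, where M† and N† denote Moore–Penrose pseudoinverses. -/
open Matrix BigOperators

/-- The four Penrose conditions: `P` is the Moore–Penrose pseudoinverse of `M`. -/
def IsMoorePenrose {m n : ℕ} (M : Matrix (Fin m) (Fin n) ℝ)
    (P : Matrix (Fin n) (Fin m) ℝ) : Prop :=
  M * P * M = M ∧ P * M * P = P ∧ (M * P)ᵀ = M * P ∧ (P * M)ᵀ = P * M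

/-- Frobenius norm of a real matrix. -/
noncomputable def frobNorm {m n : ℕ} (A : Matrix (Fin m) (Fin n) ℝ) : ℝ :=
  Real.sqrt (∑ i, ∑ j, (A i j) ^ 2)

/-- Spectral (operator ℓ₂→ℓ₂) norm of a real matrix. -/
noncomputable def specNorm {m n : ℕ} (A : Matrix (Fin m) (Fin n) ℝ) : ℝ :=
  ‖LinearMap.toContinuousLinearMap (Matrix.toEuclideanLin A)‖

/-- Squared Euclidean norm of a vector. -/
def sqNorm {n : ℕ} (x : Fin n → ℝ) : ℝ := ∑ i, (x i) ^ 2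

lemma frobNorm_proj_min {m n : ℕ}
    (P : Matrix (Fin m) (Fin m) ℝ) (Q : Matrix (Fin n) (Fin n) ℝ)
    (hPT : Pᵀ = P) (hQT : Qᵀ = Q) (hP2 : P * P = P) (hQ2 : Q * Q = Q)
    (A B : Matrix (Fin m) (Fin n) ℝ) (hB : P * B * Q = B) :
    frobNorm (A - P * A * Q) ≤ frobNorm (A - B) := by
  have hY' : (P * A * Q - B) = P * (A - B) * Q := by
    rw [Matrix.mul_sub, Matrix.sub_mul, hB]
  have hdecomp : A - B = (A - P * A * Q) + (P * A * Q - B) := by abel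
  have hPRQ : P * (A - P * A * Q) * Q = 0 := by
    rw [Matrix.mul_sub, Matrix.sub_mul]
    simp only [← Matrix.mul_assoc]
    rw [hP2, Matrix.mul_assoc (P * A) Q Q, hQ2, sub_self]
  set R := A - P * A * Q with hRdef
  set Y := P * A * Q - B with hYdef
  have hcross : ∑ i, ∑ j, R i j * Y i j = 0 := by
    have h1 : ∑ i, ∑ j, R i j * Y i j = Matrix.trace (R * Yᵀ) := by
      simp [Matrix.trace, Matrix.mul_apply, Matrix.diag]
    rw [h1, hY']
    simp only [Matrix.transpose_mul, hPT, hQT]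
    simp only [← Matrix.mul_assoc]
    rw [Matrix.trace_mul_comm _ P]
    simp only [← Matrix.mul_assoc]
    rw [hPRQ]
    simp
  rw [hdecomp]
  unfold frobNorm
  apply Real.sqrt_le_sqrt
  have key : ∑ i, ∑ j, ((R + Y) i j) ^ 2
      = (∑ i, ∑ j, (R i j) ^ 2) + 2 * (∑ i, ∑ j, R i j * Y i j)
        + ∑ i, ∑ j, (Y i j) ^ 2 := by
    rw [Finset.mul_sum, ← Finset.sum_add_distrib, ← Finset.sum_add_distrib]
    refine Finset.sum_congr rfl fun i _ => ?_
    rw [Finset.mul_sum, ← Finset.sum_add_distrib, ← Finset.sum_add_distrib]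
    refine Finset.sum_congr rfl fun j _ => ?_
    simp only [Matrix.add_apply]
    ring
  rw [key, hcross]
  have hYnn : 0 ≤ ∑ i, ∑ j, (Y i j) ^ 2 := by positivity
  linarith

theorem stmt0 (m n c r : ℕ)
    (A : Matrix (Fin m) (Fin n) ℝ) (M : Matrix (Fin m) (Fin c) ℝ)
    (N : Matrix (Fin r) (Fin n) ℝ)
    (Mdag : Matrix (Fin c) (Fin m) ℝ) (Ndag : Matrix (Fin n) (Fin r) ℝ)
    (hM : IsMoorePenrose M Mdag) (hN : IsMoorePenrose N Ndag) :
    ∀ X : Matrix (Fin c) (Fin r) ℝ,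
      frobNorm (A - M * (Mdag * A * Ndag) * N) ≤ frobNorm (A - M * X * N) := by
  intro X
  obtain ⟨hM1, hM2, hM3, hM4⟩ := hM
  obtain ⟨hN1, hN2, hN3, hN4⟩ := hN
  have hPAQ : M * (Mdag * A * Ndag) * N = (M * Mdag) * A * ((Ndag * N)) := by
    simp only [Matrix.mul_assoc]
  have hP2 : (M * Mdag) * (M * Mdag) = M * Mdag := by
    rw [Matrix.mul_assoc, ← Matrix.mul_assoc Mdag M Mdag, hM2]
  have hQ2 : (Ndag * N) * (Ndag * N) = Ndag * N := by
    rw [Matrix.mul_assoc, ← Matrix.mul_assoc N Ndag N, hN1]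
  have hB : (M * Mdag) * (M * X * N) * (Ndag * N) = M * X * N := by
    simp only [← Matrix.mul_assoc]
    rw [hM1]
    simp only [Matrix.mul_assoc]
    rw [show N * (Ndag * N) = N * Ndag * N by rw [Matrix.mul_assoc], hN1]
  rw [hPAQ]
  exact frobNorm_proj_min (M * Mdag) (Ndag * N) hM3 hN4 hP2 hQ2 A (M * X * N) hB
end

section
/- Let A ∈ ℝ^{m×n}, M ∈ ℝ^{m×c}, N ∈ ℝ^{r×n}, and X* = M†AN†. Then for any c×r matrix X, tr[(A − MX*N)ᵀ(MX*N − MXN)] = 0. -/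
open Matrix BigOperators

theorem stmt1 (m n c r : ℕ)
    (A : Matrix (Fin m) (Fin n) ℝ) (M : Matrix (Fin m) (Fin c) ℝ)
    (N : Matrix (Fin r) (Fin n) ℝ)
    (Mdag : Matrix (Fin c) (Fin m) ℝ) (Ndag : Matrix (Fin n) (Fin r) ℝ)
    (hM : IsMoorePenrose M Mdag) (hN : IsMoorePenrose N Ndag)
    (X : Matrix (Fin c) (Fin r) ℝ) :
    Matrix.trace ((A - M * (Mdag * A * Ndag) * N)ᵀ *
      (M * (Mdag * A * Ndag) * N - M * X * N)) = 0 := by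
  obtain ⟨hM1, hM2, hM3, hM4⟩ := hM
  obtain ⟨hN1, hN2, hN3, hN4⟩ := hN
  set B := A - M * (Mdag * A * Ndag) * N with hBdef
  have h1 : Nᵀ * Ndagᵀ = Ndag * N := by rw [← Matrix.transpose_mul, hN4]
  have h2 : Mdagᵀ * Mᵀ = M * Mdag := by rw [← Matrix.transpose_mul, hM3]
  have e1 : N * Nᵀ * Ndagᵀ = N := by rw [Matrix.mul_assoc, h1, ← Matrix.mul_assoc, hN1]
  have e2 : Mdagᵀ * (Mᵀ * M) = M := by
    rw [← Matrix.mul_assoc, h2, hM1]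
  have hB : N * Bᵀ * M = 0 := by
    simp only [hBdef, Matrix.transpose_sub, Matrix.transpose_mul, Matrix.mul_sub,
      Matrix.sub_mul, Matrix.mul_assoc, e2]
    rw [← Matrix.mul_assoc N Nᵀ, ← Matrix.mul_assoc _ Ndagᵀ, e1]
    simp [Matrix.mul_assoc]
  have key : M * (Mdag * A * Ndag) * N - M * X * N = M * ((Mdag * A * Ndag) - X) * N := by
    rw [Matrix.mul_sub, Matrix.sub_mul]
  rw [key]
  rw [show Bᵀ * (M * (Mdag * A * Ndag - X) * N) = (Bᵀ * (M * (Mdag * A * Ndag - X))) * N from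
        by simp [Matrix.mul_assoc],
      Matrix.trace_mul_comm,
      show N * (Bᵀ * (M * (Mdag * A * Ndag - X))) = (N * Bᵀ * M) * (Mdag * A * Ndag - X) from
        by simp [Matrix.mul_assoc],
      hB]
  simp
end

section
/- Let A ∈ ℝ^{m×n}, M ∈ ℝ^{m×c}, N ∈ ℝ^{r×n}, and X* = M†AN†. Then for any c×r matrix X, ‖A − MXN‖_F² = ‖A − MX*N‖_F² + ‖MX*N − MXN‖_F² (a Pythagorean decomposition). -/
open Matrix BigOperators

lemma frobNorm_sq {m n : ℕ} (A : Matrix (Fin m) (Fin n) ℝ) :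
    frobNorm A ^ 2 = ∑ i, ∑ j, (A i j) ^ 2 := by
  rw [frobNorm, Real.sq_sqrt]
  positivity

lemma cross_trace {m n : ℕ} (U V : Matrix (Fin m) (Fin n) ℝ) :
    ∑ i, ∑ j, U i j * V i j = Matrix.trace (Uᵀ * V) := by
  simp only [Matrix.trace, Matrix.diag, Matrix.mul_apply, Matrix.transpose_apply]
  rw [Finset.sum_comm]

lemma pyth {m n : ℕ} (P : Matrix (Fin m) (Fin m) ℝ) (Q : Matrix (Fin n) (Fin n) ℝ)
    (hPP : P * P = P) (hQQ : Q * Q = Q) (hPT : Pᵀ = P) (hQT : Qᵀ = Q)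
    (A B : Matrix (Fin m) (Fin n) ℝ) (hB : P * B * Q = B) :
    frobNorm (A - B) ^ 2 =
      frobNorm (A - P * A * Q) ^ 2 + frobNorm (P * A * Q - B) ^ 2 := by
  have hPP' : ∀ (x : Matrix (Fin m) (Fin n) ℝ), P * (P * x) = P * x := fun x => by
    rw [← Matrix.mul_assoc, hPP]
  have hPUQ : P * (A - P * A * Q) * Q = 0 := by
    simp only [Matrix.mul_sub, Matrix.sub_mul, Matrix.mul_assoc, hQQ, hPP', sub_self]
  have hV : P * (A - B) * Q = P * A * Q - B := by
    rw [Matrix.mul_sub, Matrix.sub_mul, hB]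
  have hQUP : Q * (A - P * A * Q)ᵀ * P = 0 := by
    calc Q * (A - P * A * Q)ᵀ * P = (Pᵀ * (A - P * A * Q) * Qᵀ)ᵀ := by
          simp [Matrix.transpose_mul, Matrix.mul_assoc]
      _ = 0 := by rw [hPT, hQT, hPUQ, Matrix.transpose_zero]
  have hcross : ∑ i, ∑ j, (A - P * A * Q) i j * (P * A * Q - B) i j = 0 := by
    rw [cross_trace, ← hV,
      show (A - P * A * Q)ᵀ * (P * (A - B) * Q)
          = ((A - P * A * Q)ᵀ * (P * (A - B))) * Q from by
        simp only [Matrix.mul_assoc],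
      Matrix.trace_mul_comm,
      show Q * ((A - P * A * Q)ᵀ * (P * (A - B)))
          = (Q * (A - P * A * Q)ᵀ * P) * (A - B) from by
        simp only [Matrix.mul_assoc],
      hQUP]
    simp
  have hsplit : A - B = (A - P * A * Q) + (P * A * Q - B) := by abel
  rw [hsplit, frobNorm_sq, frobNorm_sq, frobNorm_sq]
  have key : ∀ i j, ((A - P * A * Q) + (P * A * Q - B)) i j ^ 2
      = (A - P * A * Q) i j ^ 2 + (P * A * Q - B) i j ^ 2
        + 2 * ((A - P * A * Q) i j * (P * A * Q - B) i j) := by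
    intro i j
    simp only [Matrix.add_apply]
    ring
  simp only [key, Finset.sum_add_distrib, ← Finset.mul_sum]
  rw [hcross]
  ring

theorem stmt2 (m n c r : ℕ)
    (A : Matrix (Fin m) (Fin n) ℝ) (M : Matrix (Fin m) (Fin c) ℝ)
    (N : Matrix (Fin r) (Fin n) ℝ)
    (Mdag : Matrix (Fin c) (Fin m) ℝ) (Ndag : Matrix (Fin n) (Fin r) ℝ)
    (hM : IsMoorePenrose M Mdag) (hN : IsMoorePenrose N Ndag)
    (X : Matrix (Fin c) (Fin r) ℝ) :
    frobNorm (A - M * X * N) ^ 2 =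
      frobNorm (A - M * (Mdag * A * Ndag) * N) ^ 2 +
      frobNorm (M * (Mdag * A * Ndag) * N - M * X * N) ^ 2 := by
  obtain ⟨hM1, hM2, hM3, hM4⟩ := hM
  obtain ⟨hN1, hN2, hN3, hN4⟩ := hN
  have hPP : (M * Mdag) * (M * Mdag) = M * Mdag := by
    rw [← Matrix.mul_assoc, hM1]
  have hQQ : (Ndag * N) * (Ndag * N) = Ndag * N := by
    rw [← Matrix.mul_assoc, Matrix.mul_assoc Ndag N Ndag]
    rw [show Ndag * (N * Ndag) = Ndag from by rw [← Matrix.mul_assoc, hN2]]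
  have hB : (M * Mdag) * (M * X * N) * (Ndag * N) = M * X * N := by
    calc (M * Mdag) * (M * X * N) * (Ndag * N)
        = (M * Mdag * M) * X * (N * Ndag * N) := by
          simp only [Matrix.mul_assoc]
      _ = M * X * N := by rw [hM1, hN1]
  have hPAQ : M * (Mdag * A * Ndag) * N = (M * Mdag) * A * (Ndag * N) := by
    simp only [Matrix.mul_assoc]
  rw [hPAQ]
  exact pyth (M * Mdag) (Ndag * N) hPP hQQ hM3 hN4 A (M * X * N) hB
end

section
/- Let M ∈ ℝ^{m×c} with condensed SVD M = U_M Σ_M V_Mᵀ (U_M having orthonormal columns spanning the column space, Σ_M invertible diagonal, V_M with orthonormal columns). If S is an s×m matrix such that S U_M has full column rank, then (SM)† = (Σ_M V_Mᵀ)† (S U_M)†. -/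
open Matrix BigOperators

/-- Uniqueness of the Moore–Penrose pseudoinverse. -/
theorem mp_unique {m n : ℕ} {M : Matrix (Fin m) (Fin n) ℝ}
    {P Q : Matrix (Fin n) (Fin m) ℝ}
    (hP : IsMoorePenrose M P) (hQ : IsMoorePenrose M Q) : P = Q := by
  obtain ⟨hP1, hP2, hP3, hP4⟩ := hP
  obtain ⟨hQ1, hQ2, hQ3, hQ4⟩ := hQ
  have hMP : M * P = M * Q := by
    calc M * P = (M * Q * M) * P := by rw [hQ1]
      _ = (M * Q)ᵀ * (M * P)ᵀ := by rw [hQ3, hP3]; simp [Matrix.mul_assoc, Matrix.transpose_mul]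
      _ = (M * P * M * Q)ᵀ := by rw [transpose_mul]; simp [Matrix.mul_assoc, Matrix.transpose_mul]
      _ = (M * Q)ᵀ := by rw [hP1]
      _ = M * Q := hQ3
  have hPM : P * M = Q * M := by
    calc P * M = P * (M * Q * M) := by rw [hQ1]
      _ = (P * M)ᵀ * (Q * M)ᵀ := by rw [hP4, hQ4]; simp [Matrix.mul_assoc, Matrix.transpose_mul]
      _ = (Q * (M * P * M))ᵀ := by rw [transpose_mul]; simp [Matrix.mul_assoc, Matrix.transpose_mul]
      _ = (Q * M)ᵀ := by rw [hP1]
      _ = Q * M := hQ4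
  calc P = P * M * P := hP2.symm
    _ = Q * M * P := by rw [hPM]
    _ = Q * (M * P) := by simp [Matrix.mul_assoc, Matrix.transpose_mul]
    _ = Q * (M * Q) := by rw [hMP]
    _ = Q * M * Q := by simp [Matrix.mul_assoc, Matrix.transpose_mul]
    _ = Q := hQ2

/-- Full column rank gives left cancellation. -/
theorem fullcol_cancel {a b k : ℕ} {B : Matrix (Fin a) (Fin b) ℝ}
    (hrank : B.rank = b) {X Y : Matrix (Fin b) (Fin k) ℝ}
    (h : B * X = B * Y) : X = Y := by
  have hker : LinearMap.ker B.mulVecLin = ⊥ := by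
    have := B.mulVecLin.finrank_range_add_finrank_ker
    rw [Matrix.rank] at hrank
    simp only [Module.finrank_fintype_fun_eq_card, Fintype.card_fin] at this
    rw [hrank] at this
    have hz : Module.finrank ℝ (LinearMap.ker B.mulVecLin) = 0 := by omega
    exact Submodule.finrank_eq_zero.mp hz
  ext i j
  have hcol : B.mulVec (fun k => X k j) = B.mulVec (fun k => Y k j) := by
    ext r
    have := congrFun (congrFun h r) j
    simpa [Matrix.mul_apply, Matrix.mulVec, dotProduct] using this
  have : (fun k => X k j) = (fun k => Y k j) := by
    have hinj : Function.Injective B.mulVecLin := by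
      exact LinearMap.ker_eq_bot.mp hker
    exact hinj hcol
  exact congrFun this i

theorem stmt4 (m c s ρ : ℕ)
    (M : Matrix (Fin m) (Fin c) ℝ)
    (UM : Matrix (Fin m) (Fin ρ) ℝ) (SigM : Matrix (Fin ρ) (Fin ρ) ℝ)
    (VM : Matrix (Fin c) (Fin ρ) ℝ)
    (hSVD : M = UM * SigM * VMᵀ)
    (hU : UMᵀ * UM = 1) (hV : VMᵀ * VM = 1)
    (hSigdiag : ∀ i j, i ≠ j → SigM i j = 0) (hSigpos : ∀ i, 0 < SigM i i)
    (S : Matrix (Fin s) (Fin m) ℝ)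
    (hrank : (S * UM).rank = ρ)
    (P1 : Matrix (Fin c) (Fin s) ℝ) (P2 : Matrix (Fin c) (Fin ρ) ℝ)
    (P3 : Matrix (Fin ρ) (Fin s) ℝ)
    (hP1 : IsMoorePenrose (S * M) P1)
    (hP2 : IsMoorePenrose (SigM * VMᵀ) P2)
    (hP3 : IsMoorePenrose (S * UM) P3) :
    P1 = P2 * P3 := by
  set B := S * UM with hB
  set C := SigM * VMᵀ with hC
  have hSM : S * M = B * C := by
    rw [hSVD]; simp [hB, hC, Matrix.mul_assoc]
  -- P3 * B = 1
  have hP3B : P3 * B = 1 := by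
    refine fullcol_cancel hrank ?_
    rw [← Matrix.mul_assoc, hP3.1, Matrix.mul_one]
  -- SigM is diagonal with a right inverse
  have hSigeq : SigM = Matrix.diagonal (fun i => SigM i i) := by
    ext i j
    by_cases hij : i = j
    · subst hij; simp [Matrix.diagonal]
    · simp [Matrix.diagonal, hij, hSigdiag i j hij]
  set D := Matrix.diagonal (fun i => (SigM i i)⁻¹) with hD
  have hSigD : SigM * D = 1 := by
    rw [hSigeq, hD, Matrix.diagonal_mul_diagonal]
    rw [show (fun i => SigM i i * (SigM i i)⁻¹) = fun _ => (1:ℝ) from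
      funext fun i => mul_inv_cancel₀ (hSigpos i).ne', Matrix.diagonal_one]
  -- right inverse of C
  have hCR : C * (VM * D) = 1 := by
    calc C * (VM * D) = SigM * (VMᵀ * VM) * D := by
          simp [hC, Matrix.mul_assoc]
      _ = 1 := by rw [hV, Matrix.mul_one, hSigD]
  -- C * P2 = 1
  have hCP2 : C * P2 = 1 := by
    have h1 : (C * P2) * (C * (VM * D)) = C * (VM * D) := by
      rw [show (C * P2) * (C * (VM * D)) = (C * P2 * C) * (VM * D) by
        simp [Matrix.mul_assoc], hP2.1]
    rwa [hCR, Matrix.mul_one] at h1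
  -- P2 * P3 satisfies the Penrose conditions for S*M = B*C
  have key : IsMoorePenrose (S * M) (P2 * P3) := by
    rw [hSM]
    have e1 : B * C * (P2 * P3) = B * P3 := by
      calc B * C * (P2 * P3) = B * (C * P2) * P3 := by simp [Matrix.mul_assoc]
        _ = B * P3 := by rw [hCP2, Matrix.mul_one]
    have e2 : (P2 * P3) * (B * C) = P2 * C := by
      calc (P2 * P3) * (B * C) = P2 * (P3 * B) * C := by simp [Matrix.mul_assoc]
        _ = P2 * C := by rw [hP3B, Matrix.mul_one]
    refine ⟨?_, ?_, ?_, ?_⟩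
    · rw [e1]
      calc B * P3 * (B * C) = (B * P3 * B) * C := by simp [Matrix.mul_assoc]
        _ = B * C := by rw [hP3.1]
    · rw [e2]
      calc P2 * C * (P2 * P3) = (P2 * C * P2) * P3 := by simp [Matrix.mul_assoc]
        _ = P2 * P3 := by rw [hP2.2.1]
    · rw [e1]; exact hP3.2.2.1
    · rw [e2]; exact hP2.2.2.2
  exact mp_unique hP1 key
end

section
/- Let A ∈ ℝ^{m×n}, B ∈ ℝ^{m×k}, Π ∈ ℝ^{t×m}, G ∈ ℝ^{ℓ×t}. Assume: (i) ‖AᵀΠᵀΠB − AᵀB‖_F ≤ ε‖A‖_F‖B‖_F, (ii) ‖(ΠA)ᵀGᵀG(ΠB) − (ΠA)ᵀ(ΠB)‖_F ≤ ε‖ΠA‖_F‖ΠB‖_F, (iii) ‖ΠA‖_F ≤ 2‖A‖_F and ‖ΠB‖_F ≤ 2‖B‖_F. Then ‖AᵀΠᵀGᵀGΠB − AᵀB‖_F ≤ 5ε‖A‖_F‖B‖_F. -/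
open Matrix BigOperators

lemma frobNorm_eq {m n : ℕ} (M : Matrix (Fin m) (Fin n) ℝ) :
    frobNorm M = ‖(WithLp.equiv 2 (Fin m × Fin n → ℝ)).symm (fun p => M p.1 p.2)‖ := by
  rw [EuclideanSpace.norm_eq, frobNorm, Fintype.sum_prod_type]
  simp [sq_abs]

lemma frobNorm_nonneg {m n : ℕ} (M : Matrix (Fin m) (Fin n) ℝ) : 0 ≤ frobNorm M :=
  Real.sqrt_nonneg _

lemma frobNorm_triangle {m n : ℕ} (X Y : Matrix (Fin m) (Fin n) ℝ) :
    frobNorm (X + Y) ≤ frobNorm X + frobNorm Y := by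
  simp only [frobNorm_eq]
  have : (WithLp.equiv 2 (Fin m × Fin n → ℝ)).symm (fun p => (X + Y) p.1 p.2)
      = (WithLp.equiv 2 (Fin m × Fin n → ℝ)).symm (fun p => X p.1 p.2)
      + (WithLp.equiv 2 (Fin m × Fin n → ℝ)).symm (fun p => Y p.1 p.2) := by
    ext p; simp [Matrix.add_apply]
  rw [this]
  exact norm_add_le _ _

theorem stmt8 (m n k t ℓ : ℕ) (ε : ℝ) (hε : 0 < ε)
    (A : Matrix (Fin m) (Fin n) ℝ) (B : Matrix (Fin m) (Fin k) ℝ)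
    (PiM : Matrix (Fin t) (Fin m) ℝ) (G : Matrix (Fin ℓ) (Fin t) ℝ)
    (h1 : frobNorm (Aᵀ * PiMᵀ * PiM * B - Aᵀ * B) ≤ ε * frobNorm A * frobNorm B)
    (h2 : frobNorm ((PiM * A)ᵀ * Gᵀ * G * (PiM * B) - (PiM * A)ᵀ * (PiM * B)) ≤
      ε * frobNorm (PiM * A) * frobNorm (PiM * B))
    (h3 : frobNorm (PiM * A) ≤ 2 * frobNorm A)
    (h4 : frobNorm (PiM * B) ≤ 2 * frobNorm B) :
    frobNorm (Aᵀ * PiMᵀ * Gᵀ * G * PiM * B - Aᵀ * B) ≤ 5 * ε * frobNorm A * frobNorm B := by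
  have key : Aᵀ * PiMᵀ * Gᵀ * G * PiM * B - Aᵀ * B =
      ((PiM * A)ᵀ * Gᵀ * G * (PiM * B) - (PiM * A)ᵀ * (PiM * B)) +
      (Aᵀ * PiMᵀ * PiM * B - Aᵀ * B) := by
    simp only [Matrix.transpose_mul, Matrix.mul_assoc]
    abel
  rw [key]
  have t1 := frobNorm_triangle ((PiM * A)ᵀ * Gᵀ * G * (PiM * B) - (PiM * A)ᵀ * (PiM * B))
    (Aᵀ * PiMᵀ * PiM * B - Aᵀ * B)
  have hA := frobNorm_nonneg A
  have hB := frobNorm_nonneg B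
  have hPA := frobNorm_nonneg (PiM * A)
  have hPB := frobNorm_nonneg (PiM * B)
  have h5 : ε * frobNorm (PiM * A) * frobNorm (PiM * B) ≤ ε * (2 * frobNorm A) * (2 * frobNorm B) := by
    apply mul_le_mul
    · exact mul_le_mul_of_nonneg_left h3 hε.le
    · exact h4
    · exact hPB
    · positivity
  nlinarith [t1, h1, h2]
end

section
/- Let A ∈ ℝ^{m×n}, M ∈ ℝ^{m×c}, N ∈ ℝ^{r×n}, and X* = M†AN†. Then ‖(I_m − MM†)A‖_F ≤ ‖A − MX*N‖_F and ‖A(I_n − N†N)‖_F ≤ ‖A − MX*N‖_F. -/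
open Matrix BigOperators

noncomputable def frobSq {m n : ℕ} (A : Matrix (Fin m) (Fin n) ℝ) : ℝ :=
  ∑ i, ∑ j, (A i j) ^ 2

lemma frobSq_nonneg {m n : ℕ} (A : Matrix (Fin m) (Fin n) ℝ) : 0 ≤ frobSq A := by
  apply Finset.sum_nonneg; intro i _; apply Finset.sum_nonneg; intro j _; positivity

lemma inner_eq_trace_right {m n : ℕ} (B C : Matrix (Fin m) (Fin n) ℝ) :
    ∑ i, ∑ j, B i j * C i j = (B * Cᵀ).trace := by
  simp [Matrix.trace, Matrix.mul_apply, Matrix.diag]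

lemma inner_eq_trace_left {m n : ℕ} (B C : Matrix (Fin m) (Fin n) ℝ) :
    ∑ i, ∑ j, B i j * C i j = (Bᵀ * C).trace := by
  rw [Finset.sum_comm]
  simp [Matrix.trace, Matrix.mul_apply, Matrix.diag]

lemma frobSq_add {m n : ℕ} (B C : Matrix (Fin m) (Fin n) ℝ)
    (h : ∑ i, ∑ j, B i j * C i j = 0) :
    frobSq (B + C) = frobSq B + frobSq C := by
  have : ∀ i, ∑ j, (B i j + C i j)^2
      = (∑ j, (B i j)^2) + (∑ j, (C i j)^2) + 2 * ∑ j, B i j * C i j := by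
    intro i
    rw [← Finset.sum_add_distrib, Finset.mul_sum, ← Finset.sum_add_distrib]
    apply Finset.sum_congr rfl; intro j _; ring
  simp only [frobSq, Matrix.add_apply, this]
  rw [Finset.sum_add_distrib, Finset.sum_add_distrib, ← Finset.mul_sum, h]
  ring

theorem stmt11 (m n c r : ℕ)
    (A : Matrix (Fin m) (Fin n) ℝ) (M : Matrix (Fin m) (Fin c) ℝ)
    (N : Matrix (Fin r) (Fin n) ℝ)
    (Mdag : Matrix (Fin c) (Fin m) ℝ) (Ndag : Matrix (Fin n) (Fin r) ℝ)
    (hM : IsMoorePenrose M Mdag) (hN : IsMoorePenrose N Ndag) :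
    frobNorm ((1 - M * Mdag) * A) ≤ frobNorm (A - M * (Mdag * A * Ndag) * N) ∧
    frobNorm (A * (1 - Ndag * N)) ≤ frobNorm (A - M * (Mdag * A * Ndag) * N) := by
  set P := M * Mdag with hP
  set Q := Ndag * N with hQ
  have hPP : P * P = P := by
    rw [hP, ← Matrix.mul_assoc, hM.1]
  have hQQ : Q * Q = Q := by
    rw [hQ, Matrix.mul_assoc, ← Matrix.mul_assoc N, hN.1]
  have hPt : Pᵀ = P := hM.2.2.1
  have hQt : Qᵀ = Q := hN.2.2.2
  set T1 := (1 - P) * A * Q with hT1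
  set T2 := (1 - P) * A * (1 - Q) with hT2
  set T3 := P * A * (1 - Q) with hT3
  have hmid : M * (Mdag * A * Ndag) * N = P * A * Q := by
    rw [hP, hQ]; simp only [Matrix.mul_assoc]
  have hD : A - M * (Mdag * A * Ndag) * N = T1 + (T2 + T3) := by
    rw [hmid, hT1, hT2, hT3]
    simp only [Matrix.sub_mul, Matrix.mul_sub, Matrix.one_mul, Matrix.mul_one]
    abel
  have hL : (1 - P) * A = T1 + T2 := by
    rw [hT1, hT2]
    simp only [Matrix.sub_mul, Matrix.mul_sub, Matrix.one_mul, Matrix.mul_one]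
    abel
  have hR : A * (1 - Q) = T2 + T3 := by
    rw [hT2, hT3]
    simp only [Matrix.sub_mul, Matrix.mul_sub, Matrix.one_mul, Matrix.mul_one]
    abel
  have hQ0 : Q * (1 - Q)ᵀ = 0 := by
    rw [Matrix.transpose_sub, Matrix.transpose_one, hQt, Matrix.mul_sub, Matrix.mul_one,
      hQQ, sub_self]
  have hP0 : (1 - P)ᵀ * P = 0 := by
    rw [Matrix.transpose_sub, Matrix.transpose_one, hPt, Matrix.sub_mul, Matrix.one_mul,
      hPP, sub_self]
  have h12 : ∑ i, ∑ j, T1 i j * T2 i j = 0 := by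
    rw [inner_eq_trace_right]
    have h0 : T1 * T2ᵀ = 0 := by
      rw [hT1, hT2]
      simp only [Matrix.transpose_mul, Matrix.mul_assoc]
      rw [← Matrix.mul_assoc Q, hQ0, Matrix.zero_mul, Matrix.mul_zero, Matrix.mul_zero]
    rw [h0, Matrix.trace_zero]
  have h13 : ∑ i, ∑ j, T1 i j * T3 i j = 0 := by
    rw [inner_eq_trace_right]
    have h0 : T1 * T3ᵀ = 0 := by
      rw [hT1, hT3]
      simp only [Matrix.transpose_mul, Matrix.mul_assoc]
      rw [← Matrix.mul_assoc Q, hQ0, Matrix.zero_mul, Matrix.mul_zero, Matrix.mul_zero]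
    rw [h0, Matrix.trace_zero]
  have h23 : ∑ i, ∑ j, T2 i j * T3 i j = 0 := by
    rw [inner_eq_trace_left]
    have h0 : T2ᵀ * T3 = 0 := by
      rw [hT2, hT3]
      simp only [Matrix.transpose_mul, Matrix.mul_assoc]
      rw [← Matrix.mul_assoc ((1 - P)ᵀ), hP0, Matrix.zero_mul, Matrix.mul_zero,
        Matrix.mul_zero]
    rw [h0, Matrix.trace_zero]
  have h1_23 : ∑ i, ∑ j, T1 i j * (T2 + T3) i j = 0 := by
    simp only [Matrix.add_apply, mul_add, Finset.sum_add_distrib, h12, h13, add_zero]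
  have hfD : frobSq (A - M * (Mdag * A * Ndag) * N)
      = frobSq T1 + (frobSq T2 + frobSq T3) := by
    rw [hD, frobSq_add _ _ h1_23, frobSq_add _ _ h23]
  have hfL : frobSq ((1 - P) * A) = frobSq T1 + frobSq T2 := by
    rw [hL, frobSq_add _ _ h12]
  have hfR : frobSq (A * (1 - Q)) = frobSq T2 + frobSq T3 := by
    rw [hR, frobSq_add _ _ h23]
  have key : ∀ (X : Matrix (Fin m) (Fin n) ℝ),
      frobSq X ≤ frobSq (A - M * (Mdag * A * Ndag) * N) →
      frobNorm X ≤ frobNorm (A - M * (Mdag * A * Ndag) * N) := fun X hX =>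
    Real.sqrt_le_sqrt hX
  constructor
  · apply key; rw [hfL, hfD]
    have := frobSq_nonneg T3; linarith
  · apply key; rw [hfR, hfD]
    have := frobSq_nonneg T1; linarith
end

section
/- Let A ∈ ℝ^{m×n}, M ∈ ℝ^{m×c}, N ∈ ℝ^{r×n} with condensed SVDs M = U_M Σ_M V_Mᵀ, N = U_N Σ_N V_Nᵀ, and sketching matrices S_M ∈ ℝ^{s_c×m}, S_N ∈ ℝ^{s_r×n} such that S_M U_M and S_N V_N have full column rank. Let X̂ = (S_M M)† S_M A S_Nᵀ (N S_Nᵀ)†. Then M X̂ N = U_M (S_M U_M)† S_M A S_Nᵀ (V_Nᵀ S_Nᵀ)† V_Nᵀ. -/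
open Matrix BigOperators

lemma isUnit_of_rank_eq {k : ℕ} (E : Matrix (Fin k) (Fin k) ℝ) (h : E.rank = k) :
    IsUnit E := by
  rw [← Matrix.mulVec_injective_iff_isUnit]
  have hsurj : Function.Surjective E.mulVecLin := by
    rw [← LinearMap.range_eq_top]
    apply Submodule.eq_top_of_finrank_eq
    have h2 : Module.finrank ℝ (Fin k → ℝ) = k := by simp
    rw [h2]; exact h
  exact (LinearMap.injective_iff_surjective (f := E.mulVecLin)).2 hsurj

lemma moorePenrose_unique {m n : ℕ} (B : Matrix (Fin m) (Fin n) ℝ)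
    (P Q : Matrix (Fin n) (Fin m) ℝ)
    (hP : IsMoorePenrose B P) (hQ : IsMoorePenrose B Q) : P = Q := by
  obtain ⟨hP1, hP2, hP3, hP4⟩ := hP
  obtain ⟨hQ1, hQ2, hQ3, hQ4⟩ := hQ
  have hBP : B * P = B * Q := by
    calc B * P = B * Q * B * P := by rw [hQ1]
      _ = (B * Q) * (B * P) := by simp only [Matrix.mul_assoc]
      _ = (B * Q)ᵀ * (B * P)ᵀ := by rw [hQ3, hP3]
      _ = ((B * P) * (B * Q))ᵀ := (Matrix.transpose_mul _ _).symm
      _ = (B * P * B * Q)ᵀ := by simp only [Matrix.mul_assoc]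
      _ = (B * Q)ᵀ := by rw [hP1]
      _ = B * Q := hQ3
  have hPB : P * B = Q * B := by
    calc P * B = P * (B * Q * B) := by rw [hQ1]
      _ = (P * B) * (Q * B) := by simp only [Matrix.mul_assoc]
      _ = (P * B)ᵀ * (Q * B)ᵀ := by rw [hP4, hQ4]
      _ = ((Q * B) * (P * B))ᵀ := (Matrix.transpose_mul _ _).symm
      _ = (Q * (B * P * B))ᵀ := by simp only [Matrix.mul_assoc]
      _ = (Q * B)ᵀ := by rw [hP1]
      _ = Q * B := hQ4
  calc P = P * B * P := hP2.symm
    _ = Q * B * P := by rw [hPB]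
    _ = Q * (B * P) := by rw [Matrix.mul_assoc]
    _ = Q * (B * Q) := by rw [hBP]
    _ = Q * B * Q := by rw [Matrix.mul_assoc]
    _ = Q := hQ2

theorem stmt16 (m n c r sc sr ρM ρN : ℕ)
    (A : Matrix (Fin m) (Fin n) ℝ) (M : Matrix (Fin m) (Fin c) ℝ)
    (N : Matrix (Fin r) (Fin n) ℝ)
    (UM : Matrix (Fin m) (Fin ρM) ℝ) (SigM : Matrix (Fin ρM) (Fin ρM) ℝ)
    (VM : Matrix (Fin c) (Fin ρM) ℝ)
    (UN : Matrix (Fin r) (Fin ρN) ℝ) (SigN : Matrix (Fin ρN) (Fin ρN) ℝ)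
    (VN : Matrix (Fin n) (Fin ρN) ℝ)
    (hMsvd : M = UM * SigM * VMᵀ) (hNsvd : N = UN * SigN * VNᵀ)
    (hUM : UMᵀ * UM = 1) (hVM : VMᵀ * VM = 1)
    (hUN : UNᵀ * UN = 1) (hVN : VNᵀ * VN = 1)
    (hSigM : IsUnit SigM.det) (hSigMdiag : ∀ i j, i ≠ j → SigM i j = 0)
    (hSigN : IsUnit SigN.det) (hSigNdiag : ∀ i j, i ≠ j → SigN i j = 0)
    (SM : Matrix (Fin sc) (Fin m) ℝ) (SN : Matrix (Fin sr) (Fin n) ℝ)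
    (hrankM : (SM * UM).rank = ρM) (hrankN : (SN * VN).rank = ρN)
    (P1 : Matrix (Fin c) (Fin sc) ℝ) (P2 : Matrix (Fin sr) (Fin r) ℝ)
    (P3 : Matrix (Fin ρM) (Fin sc) ℝ) (P4 : Matrix (Fin sr) (Fin ρN) ℝ)
    (hP1 : IsMoorePenrose (SM * M) P1)
    (hP2 : IsMoorePenrose (N * SNᵀ) P2)
    (hP3 : IsMoorePenrose (SM * UM) P3)
    (hP4 : IsMoorePenrose (VNᵀ * SNᵀ) P4) :
    M * (P1 * SM * A * SNᵀ * P2) * N =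
      UM * P3 * SM * A * SNᵀ * P4 * VNᵀ := by
  obtain ⟨h31, h32, h33, h34⟩ := hP3
  obtain ⟨h41, h42, h43, h44⟩ := hP4
  have hMM : SigM * SigM⁻¹ = 1 := Matrix.mul_nonsing_inv _ hSigM
  have hMM' : SigM⁻¹ * SigM = 1 := Matrix.nonsing_inv_mul _ hSigM
  have hNN : SigN * SigN⁻¹ = 1 := Matrix.mul_nonsing_inv _ hSigN
  have hNN' : SigN⁻¹ * SigN = 1 := Matrix.nonsing_inv_mul _ hSigN
  -- P3 * (SM * UM) = 1
  have hE : P3 * (SM * UM) = 1 := by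
    have hidem : (P3 * (SM * UM)) * (P3 * (SM * UM)) = P3 * (SM * UM) := by
      calc (P3 * (SM * UM)) * (P3 * (SM * UM))
          = (P3 * (SM * UM) * P3) * (SM * UM) := by simp only [Matrix.mul_assoc]
        _ = P3 * (SM * UM) := by rw [h32]
    have hrle : ρM ≤ (P3 * (SM * UM)).rank := by
      have h1 : (SM * UM).rank = ((SM * UM) * (P3 * (SM * UM))).rank := by
        conv_lhs => rw [← h31]
        simp only [Matrix.mul_assoc]
      have h2 := Matrix.rank_mul_le_right (SM * UM) (P3 * (SM * UM))
      omega
    have hrge : (P3 * (SM * UM)).rank ≤ ρM := Matrix.rank_le_width _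
    have hu : IsUnit (P3 * (SM * UM)) := isUnit_of_rank_eq _ (le_antisymm hrge hrle)
    have := hu.mul_left_cancel (a := P3 * (SM * UM))
      (b := P3 * (SM * UM)) (c := 1) (by rw [Matrix.mul_one]; exact hidem)
    exact this
  -- (VNᵀ * SNᵀ) * P4 = 1
  have hF : (VNᵀ * SNᵀ) * P4 = 1 := by
    have hidem : ((VNᵀ * SNᵀ) * P4) * ((VNᵀ * SNᵀ) * P4) = (VNᵀ * SNᵀ) * P4 := by
      calc ((VNᵀ * SNᵀ) * P4) * ((VNᵀ * SNᵀ) * P4)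
          = ((VNᵀ * SNᵀ)) * ((P4 * (VNᵀ * SNᵀ)) * P4) := by simp only [Matrix.mul_assoc]
        _ = (VNᵀ * SNᵀ) * P4 := by rw [h42]
    have hrk : (VNᵀ * SNᵀ).rank = ρN := by
      have : VNᵀ * SNᵀ = (SN * VN)ᵀ := (Matrix.transpose_mul _ _).symm
      rw [this, Matrix.rank_transpose, hrankN]
    have hrle : ρN ≤ ((VNᵀ * SNᵀ) * P4).rank := by
      have h1 : (VNᵀ * SNᵀ).rank = (((VNᵀ * SNᵀ) * P4) * (VNᵀ * SNᵀ)).rank := by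
        conv_lhs => rw [← h41]
      have h2 := Matrix.rank_mul_le_left ((VNᵀ * SNᵀ) * P4) (VNᵀ * SNᵀ)
      omega
    have hrge : ((VNᵀ * SNᵀ) * P4).rank ≤ ρN := Matrix.rank_le_width _
    have hu : IsUnit ((VNᵀ * SNᵀ) * P4) := isUnit_of_rank_eq _ (le_antisymm hrge hrle)
    exact hu.mul_left_cancel (by rw [Matrix.mul_one]; exact hidem)
  -- pair rewriting lemmas
  have hVM2 : ∀ {p : ℕ} (X : Matrix (Fin ρM) (Fin p) ℝ), VMᵀ * (VM * X) = X := by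
    intro p X; rw [← Matrix.mul_assoc, hVM, Matrix.one_mul]
  have hUN2 : ∀ {p : ℕ} (X : Matrix (Fin ρN) (Fin p) ℝ), UNᵀ * (UN * X) = X := by
    intro p X; rw [← Matrix.mul_assoc, hUN, Matrix.one_mul]
  have hSM2 : ∀ {p : ℕ} (X : Matrix (Fin ρM) (Fin p) ℝ), SigM * (SigM⁻¹ * X) = X := by
    intro p X; rw [← Matrix.mul_assoc, hMM, Matrix.one_mul]
  have hSM2' : ∀ {p : ℕ} (X : Matrix (Fin ρM) (Fin p) ℝ), SigM⁻¹ * (SigM * X) = X := by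
    intro p X; rw [← Matrix.mul_assoc, hMM', Matrix.one_mul]
  have hSN2 : ∀ {p : ℕ} (X : Matrix (Fin ρN) (Fin p) ℝ), SigN * (SigN⁻¹ * X) = X := by
    intro p X; rw [← Matrix.mul_assoc, hNN, Matrix.one_mul]
  have hSN2' : ∀ {p : ℕ} (X : Matrix (Fin ρN) (Fin p) ℝ), SigN⁻¹ * (SigN * X) = X := by
    intro p X; rw [← Matrix.mul_assoc, hNN', Matrix.one_mul]
  have hE2 : ∀ {p : ℕ} (X : Matrix (Fin ρM) (Fin p) ℝ), P3 * (SM * (UM * X)) = X := by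
    intro p X
    rw [← Matrix.mul_assoc SM UM X, ← Matrix.mul_assoc P3 (SM * UM) X, hE, Matrix.one_mul]
  have hF2 : ∀ {p : ℕ} (X : Matrix (Fin ρN) (Fin p) ℝ), VNᵀ * (SNᵀ * (P4 * X)) = X := by
    intro p X
    rw [← Matrix.mul_assoc SNᵀ P4 X, ← Matrix.mul_assoc VNᵀ (SNᵀ * P4) X,
      ← Matrix.mul_assoc VNᵀ SNᵀ P4, hF, Matrix.one_mul]
  -- P1 equals V_M Σ_M⁻¹ P3
  have hQ1 : IsMoorePenrose (SM * M) (VM * SigM⁻¹ * P3) := by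
    have c1 : SM * M * (VM * SigM⁻¹ * P3) = SM * (UM * P3) := by
      rw [hMsvd]; simp only [Matrix.mul_assoc, hVM2, hSM2]
    have c2 : (VM * SigM⁻¹ * P3) * (SM * M) = VM * VMᵀ := by
      rw [hMsvd]; simp only [Matrix.mul_assoc, hE2, hSM2']
    refine ⟨?_, ?_, ?_, ?_⟩
    · rw [c1, hMsvd]; simp only [Matrix.mul_assoc, hE2]
    · rw [c2]; simp only [Matrix.mul_assoc, hVM2]
    · rw [c1, ← Matrix.mul_assoc]
      exact h33
    · rw [c2, Matrix.transpose_mul, Matrix.transpose_transpose]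
  have hP1eq : P1 = VM * SigM⁻¹ * P3 := moorePenrose_unique _ _ _ hP1 hQ1
  -- P2 equals P4 Σ_N⁻¹ U_Nᵀ
  have hQ2 : IsMoorePenrose (N * SNᵀ) (P4 * SigN⁻¹ * UNᵀ) := by
    have c1 : (P4 * SigN⁻¹ * UNᵀ) * (N * SNᵀ) = P4 * (VNᵀ * SNᵀ) := by
      rw [hNsvd]; simp only [Matrix.mul_assoc, hUN2, hSN2']
    have c2 : (N * SNᵀ) * (P4 * SigN⁻¹ * UNᵀ) = UN * UNᵀ := by
      rw [hNsvd]; simp only [Matrix.mul_assoc, hF2, hSN2]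
    refine ⟨?_, ?_, ?_, ?_⟩
    · rw [c2, hNsvd]; simp only [Matrix.mul_assoc, hUN2]
    · rw [c1]; simp only [Matrix.mul_assoc, hF2]
    · rw [c2, Matrix.transpose_mul, Matrix.transpose_transpose]
    · rw [c1]; exact h44
  have hP2eq : P2 = P4 * SigN⁻¹ * UNᵀ := moorePenrose_unique _ _ _ hP2 hQ2
  rw [hP1eq, hP2eq, hMsvd, hNsvd]
  simp only [Matrix.mul_assoc, hVM2, hSM2, hUN2, hSN2']
end
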